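/- Let r ∈ ℕ, let α, α₁ ∈ ℝ with |α − α₁| < 2^{−r−1}, and let (f_n)_{n≥0} be a sequence of lifts of orientation-preserving C^∞ circle diffeomorphisms with f₀ = R_{α₁} such that d_{n+r}(f_{n−1}, f_n) < 2^{−n−r−1} for all n ≥ 1. Then there exists a lift f of an orientation-preserving C^∞ circle diffeomorphism such that for every s ∈ ℕ, ‖f_n − f‖_s → 0 and ‖f_n^{−1} − f^{−1}‖_s → 0 as n → ∞, and d_r(f, R_α) < 2^{−r}. -/

import Mathlib

noncomputable section
open MeasureTheory Filter Topology

/-- A lift of an orientation-preserving `C^∞` circle diffeomorphism: a `C^∞` map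
`f : ℝ → ℝ` with `f (x+1) = f x + 1` and everywhere positive derivative. -/
def IsCircleDiffeoLift (f : ℝ → ℝ) : Prop :=
  ContDiff ℝ (⊤ : ℕ∞) f ∧ (∀ x : ℝ, f (x + 1) = f x + 1) ∧ ∀ x : ℝ, 0 < deriv f x

/-- The `C^r` norm `‖φ‖_r = max_{0 ≤ i ≤ r} sup_x |φ^{(i)}(x)|`. -/
def CrNorm (r : ℕ) (φ : ℝ → ℝ) : ℝ :=
  (Finset.range (r + 1)).sup' (Finset.nonempty_range_iff.mpr r.succ_ne_zero)
    fun i => ⨆ x : ℝ, |iteratedDeriv i φ x|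

/-- `d_r(f, g) = max {‖f - g‖_r, ‖f⁻¹ - g⁻¹‖_r}`. -/
def liftDist (r : ℕ) (f g : ℝ → ℝ) : ℝ :=
  max (CrNorm r (fun x => f x - g x))
    (CrNorm r (fun x => Function.invFun f x - Function.invFun g x))

/-- `|f|_r = max {‖f - id‖_r, ‖f⁻¹ - id‖_r, 1}`. -/
def liftNorm (r : ℕ) (f : ℝ → ℝ) : ℝ :=
  max (max (CrNorm r (fun x => f x - x)) (CrNorm r (fun x => Function.invFun f x - x))) 1

/-- The lift `x ↦ x + a` of the rotation by `a`. -/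
def RotLift (a : ℝ) : ℝ → ℝ := fun x => x + a

/-- The rotation number of the circle diffeomorphism induced by the lift `f` equals `a`
(mod 1): the translation number `lim (fⁿ(0) - 0)/n` equals `a + k` for some integer `k`. -/
def HasRotationNumber (f : ℝ → ℝ) (a : ℝ) : Prop :=
  ∃ k : ℤ, Tendsto (fun n : ℕ => f^[n] 0 / (n : ℝ)) atTop (nhds (a + k))

/-- The lift of the `i`-th iterate (`i ∈ ℤ`) of the circle diffeomorphism induced by `f`. -/
def zpowLift (f : ℝ → ℝ) : ℤ → ℝ → ℝ := fun i =>
  if 0 ≤ i then f^[i.toNat] else (Function.invFun f)^[(-i).toNat]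

/-- The ratio set of a circle diffeomorphism, described through the family `Fz i` of its
iterates (`i ∈ ℤ`) and the family `D i` of the derivatives of its iterates: `t ≥ 0` lies in
the ratio set iff for every Borel `A` of positive Haar measure and every `ε > 0` there are a
Borel `B ⊆ A` of positive measure and `i ∈ ℤ` with `Fz i '' B ⊆ A` and `|D i x - t| < ε`
on `B`. -/
def ratioSet (Fz : ℤ → UnitAddCircle → UnitAddCircle) (D : ℤ → UnitAddCircle → ℝ) : Set ℝ :=
  {t : ℝ | 0 ≤ t ∧ ∀ A : Set UnitAddCircle, MeasurableSet A → 0 < volume A →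
    ∀ ε : ℝ, 0 < ε → ∃ B : Set UnitAddCircle, MeasurableSet B ∧ B ⊆ A ∧ 0 < volume B ∧
      ∃ i : ℤ, Fz i '' B ⊆ A ∧ ∀ x ∈ B, |D i x - t| < ε}

/-- A lift of an orientation-preserving `C¹` circle diffeomorphism. -/
def IsC1CircleLift (f : ℝ → ℝ) : Prop :=
  ContDiff ℝ 1 f ∧ (∀ x : ℝ, f (x + 1) = f x + 1) ∧ ∀ x : ℝ, 0 < deriv f x

/-! The hypothesis `d_{n+r}(f_{n-1}, f_n) < 2^{-n-r-1}` controls derivatives of order up to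
`n + r`, so for every fixed order `i` the `i`-th derivatives of `f_n`, and likewise those of
`f_n⁻¹`, form a uniformly geometrically Cauchy sequence once `n ≥ i - r`. Their uniform limits
are the derivatives of smooth limits `F` and `G`, with `|D^i f_n - D^i F| ≤ 2^{-n-r-1}` for
`i ≤ n + r + 1`. Passing to the limit in `f_n⁻¹ ∘ f_n = id` and `f_n ∘ f_n⁻¹ = id` gives
`G = F⁻¹`; hence `F'` never vanishes, and `F' ≥ 0` as a limit of positive functions. At `n = 0`
the bounds say `d_{r+1}(R_{α₁}, F) ≤ 2^{-r-1}`, and moving the rotation from `α₁` to `α` costs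
`|α - α₁| < 2^{-r-1}` in every `C^r` norm. -/

open Function
open scoped ContDiff

theorem Function.Periodic.iteratedDeriv {𝕜 E : Type*} [NontriviallyNormedField 𝕜]
    [NormedAddCommGroup E] [NormedSpace 𝕜 E] {φ : 𝕜 → E} {c : 𝕜} (h : Periodic φ c) (i : ℕ) :
    Periodic (iteratedDeriv i φ) c := fun x => by
  have hφ : (fun z => φ (z + c)) = φ := funext h
  rw [← congrFun (iteratedDeriv_comp_add_const i φ c) x, hφ]

theorem periodic_sub_of_map_add_one {f g : ℝ → ℝ} (hf : ∀ x, f (x + 1) = f x + 1)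
    (hg : ∀ x, g (x + 1) = g x + 1) : Periodic (fun x => f x - g x) 1 := fun x => by
  simp only [hf, hg, add_sub_add_right_eq_sub]

theorem crNorm_nonneg (s : ℕ) (φ : ℝ → ℝ) : 0 ≤ CrNorm s φ :=
  (Real.iSup_nonneg fun _ => abs_nonneg _).trans
    (Finset.le_sup' (fun i => ⨆ x, |iteratedDeriv i φ x|) (Finset.mem_range.mpr s.succ_pos))

theorem crNorm_le {s : ℕ} {φ : ℝ → ℝ} {b : ℝ}
    (h : ∀ i ≤ s, ∀ x, |iteratedDeriv i φ x| ≤ b) : CrNorm s φ ≤ b :=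
  Finset.sup'_le _ _ fun i hi =>
    Real.iSup_le (h i (Nat.lt_succ_iff.mp (Finset.mem_range.mp hi)))
      ((abs_nonneg _).trans (h 0 (Nat.zero_le _) 0))

theorem crNorm_mono {k s : ℕ} (hks : k ≤ s) (φ : ℝ → ℝ) : CrNorm k φ ≤ CrNorm s φ :=
  Finset.sup'_mono _ (Finset.range_subset_range.mpr (by omega)) _

theorem crNorm_sub_comm (s : ℕ) (f g : ℝ → ℝ) :
    CrNorm s (fun x => f x - g x) = CrNorm s (fun x => g x - f x) := by
  have hneg : (fun x => g x - f x) = fun x => -(f x - g x) := funext fun _ => (neg_sub _ _).symm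
  simp only [CrNorm, hneg, iteratedDeriv_fun_neg, abs_neg]

theorem abs_iteratedDeriv_le_crNorm {s i : ℕ} {φ : ℝ → ℝ} {c : ℝ} (hφ : ContDiff ℝ s φ)
    (hp : Periodic φ c) (hc : c ≠ 0) (hi : i ≤ s) (x : ℝ) :
    |iteratedDeriv i φ x| ≤ CrNorm s φ := by
  have hcont : Continuous fun y => |iteratedDeriv i φ y| :=
    (hφ.continuous_iteratedDeriv i (by exact_mod_cast hi)).abs
  have hbdd := (((hp.iteratedDeriv i).comp abs).compact_of_continuous hc hcont).bddAbove
  exact (le_ciSup hbdd x).trans (Finset.le_sup' (fun j => ⨆ y, |iteratedDeriv j φ y|)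
    (Finset.mem_range.mpr (by omega)))

theorem crNorm_add_const_le {s : ℕ} {φ : ℝ → ℝ} {c : ℝ} (hφ : ContDiff ℝ s φ)
    (hp : Periodic φ c) (hc : c ≠ 0) (a : ℝ) :
    CrNorm s (fun x => φ x + a) ≤ CrNorm s φ + |a| := by
  refine crNorm_le fun i hi x => ?_
  have hφx := abs_iteratedDeriv_le_crNorm hφ hp hc hi x
  rcases Nat.eq_zero_or_pos i with rfl | hpos
  · simp only [iteratedDeriv_zero] at hφx ⊢
    exact (abs_add_le _ _).trans (by linarith)
  · have hcomm : (fun x => φ x + a) = fun x => a + φ x := funext fun _ => add_comm _ _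
    rw [hcomm, iteratedDeriv_const_add hpos]
    linarith [abs_nonneg a]

theorem crNorm_sub_le {s : ℕ} {f g : ℝ → ℝ} (hf : ContDiff ℝ s f) (hg : ContDiff ℝ s g) {b : ℝ}
    (h : ∀ i ≤ s, ∀ x, dist (iteratedDeriv i f x) (iteratedDeriv i g x) ≤ b) :
    CrNorm s (fun x => f x - g x) ≤ b :=
  crNorm_le fun i hi x => by
    rw [iteratedDeriv_fun_sub ((hf.of_le (by exact_mod_cast hi)).contDiffAt)
      ((hg.of_le (by exact_mod_cast hi)).contDiffAt), ← Real.dist_eq]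
    exact h i hi x

theorem dist_iteratedDeriv_le_crNorm_sub {s i : ℕ} {f g : ℝ → ℝ} {c : ℝ} (hf : ContDiff ℝ s f)
    (hg : ContDiff ℝ s g) (hp : Periodic (fun x => f x - g x) c) (hc : c ≠ 0) (hi : i ≤ s)
    (x : ℝ) : dist (iteratedDeriv i f x) (iteratedDeriv i g x) ≤ CrNorm s (fun x => f x - g x) := by
  rw [Real.dist_eq, ← iteratedDeriv_fun_sub ((hf.of_le (by exact_mod_cast hi)).contDiffAt)
      ((hg.of_le (by exact_mod_cast hi)).contDiffAt)]
  exact abs_iteratedDeriv_le_crNorm (hf.sub hg) hp hc hi x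

theorem liftDist_comm (s : ℕ) (f g : ℝ → ℝ) : liftDist s f g = liftDist s g f := by
  rw [liftDist, liftDist, crNorm_sub_comm s f, crNorm_sub_comm s (invFun f)]

theorem liftDist_mono {k s : ℕ} (hks : k ≤ s) (f g : ℝ → ℝ) : liftDist k f g ≤ liftDist s f g :=
  max_le_max (crNorm_mono hks _) (crNorm_mono hks _)

namespace IsCircleDiffeoLift

variable {f g : ℝ → ℝ}

theorem strictMono (hf : IsCircleDiffeoLift f) : StrictMono f :=
  strictMono_of_deriv_pos hf.2.2

theorem surjective (hf : IsCircleDiffeoLift f) : Surjective f := by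
  have hcont : Continuous f := hf.1.continuous
  obtain ⟨M, hM⟩ := isBounded_iff_forall_norm_le.mp
    ((periodic_sub_of_map_add_one hf.2.1 fun _ => rfl).isBounded_of_continuous one_ne_zero
      (hcont.sub continuous_id))
  have hM' : ∀ x, |f x - x| ≤ M := fun x => hM _ ⟨x, rfl⟩
  refine hcont.surjective ?_ ?_
  · refine tendsto_atTop_mono (fun x => ?_) (tendsto_atTop_add_const_right _ (-M) tendsto_id)
    linarith [(abs_le.mp (hM' x)).1, show id x = x from rfl]
  · refine tendsto_atBot_mono (fun x => ?_) (tendsto_atBot_add_const_right _ M tendsto_id)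
    linarith [(abs_le.mp (hM' x)).2, show id x = x from rfl]

theorem leftInverse_invFun (hf : IsCircleDiffeoLift f) : LeftInverse (invFun f) f :=
  Function.leftInverse_invFun hf.strictMono.injective

theorem rightInverse_invFun (hf : IsCircleDiffeoLift f) : RightInverse (invFun f) f :=
  Function.rightInverse_invFun hf.surjective

protected theorem invFun (hf : IsCircleDiffeoLift f) : IsCircleDiffeoLift (invFun f) := by
  set e : ℝ ≃ₜ ℝ := (hf.strictMono.orderIsoOfSurjective f hf.surjective).toHomeomorph
  have he : invFun f = e.symm := funext fun y =>
    hf.strictMono.injective ((hf.rightInverse_invFun y).trans (e.apply_symm_apply y).symm)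
  have hderiv : ∀ y, HasDerivAt (invFun f) (deriv f (invFun f y))⁻¹ y := fun y =>
    HasDerivAt.of_local_left_inverse (he ▸ e.symm.continuous.continuousAt)
      (hf.1.differentiable (by simp) _).hasDerivAt (hf.2.2 _).ne'
      (Eventually.of_forall hf.rightInverse_invFun)
  refine ⟨he ▸ e.contDiff_symm_deriv (fun x => (hf.2.2 x).ne')
      (fun x => (hf.1.differentiable (by simp) x).hasDerivAt) hf.1, fun y => ?_, fun y => ?_⟩
  · conv_rhs => rw [← hf.leftInverse_invFun (invFun f y + 1)]
    rw [hf.2.1, hf.rightInverse_invFun]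
  · rw [(hderiv y).deriv]
    exact inv_pos.mpr (hf.2.2 _)

theorem invFun_invFun (hf : IsCircleDiffeoLift f) : invFun (invFun f) = f :=
  funext fun x => hf.invFun.strictMono.injective
    ((hf.invFun.rightInverse_invFun x).trans (hf.leftInverse_invFun x).symm)

theorem liftDist_invFun (hf : IsCircleDiffeoLift f) (hg : IsCircleDiffeoLift g) (s : ℕ) :
    liftDist s (invFun f) (invFun g) = liftDist s f g := by
  rw [liftDist, liftDist, hf.invFun_invFun, hg.invFun_invFun, max_comm]

theorem dist_iteratedDeriv_le_liftDist (hf : IsCircleDiffeoLift f) (hg : IsCircleDiffeoLift g)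
    {i s : ℕ} (hi : i ≤ s) (x : ℝ) :
    dist (iteratedDeriv i f x) (iteratedDeriv i g x) ≤ liftDist s f g :=
  (dist_iteratedDeriv_le_crNorm_sub (contDiff_infty.mp hf.1 _)
    (contDiff_infty.mp hg.1 _) (periodic_sub_of_map_add_one hf.2.1 hg.2.1)
    one_ne_zero hi x).trans (le_max_left _ _)

theorem liftDist_le (hf : IsCircleDiffeoLift f) (hg : IsCircleDiffeoLift g) {s : ℕ} {b : ℝ}
    (h : ∀ i ≤ s, ∀ x, dist (iteratedDeriv i f x) (iteratedDeriv i g x) ≤ b)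
    (hinv : ∀ i ≤ s, ∀ x,
      dist (iteratedDeriv i (invFun f) x) (iteratedDeriv i (invFun g) x) ≤ b) :
    liftDist s f g ≤ b :=
  max_le (crNorm_sub_le (contDiff_infty.mp hf.1 s) (contDiff_infty.mp hg.1 s) h)
    (crNorm_sub_le (contDiff_infty.mp hf.invFun.1 s) (contDiff_infty.mp hg.invFun.1 s) hinv)

end IsCircleDiffeoLift

theorem isCircleDiffeoLift_rotLift (a : ℝ) : IsCircleDiffeoLift (RotLift a) := by
  refine ⟨contDiff_id.add contDiff_const, fun x => add_right_comm x 1 a, fun x => ?_⟩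
  have hderiv : HasDerivAt (RotLift a) 1 x := (hasDerivAt_id x).add_const a
  exact hderiv.deriv ▸ one_pos

theorem invFun_rotLift (a : ℝ) : invFun (RotLift a) = RotLift (-a) :=
  funext fun y => (isCircleDiffeoLift_rotLift a).strictMono.injective
    (((isCircleDiffeoLift_rotLift a).rightInverse_invFun y).trans (by simp [RotLift]))

theorem crNorm_sub_rotLift_le {s : ℕ} {f : ℝ → ℝ} (hf : ContDiff ℝ s f)
    (hf1 : ∀ x, f (x + 1) = f x + 1) (a b : ℝ) :
    CrNorm s (fun x => f x - RotLift a x) ≤ CrNorm s (fun x => f x - RotLift b x) + |b - a| := by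
  have hshift : (fun x => f x - RotLift a x) = fun x => (f x - RotLift b x) + (b - a) :=
    funext fun x => by simp only [RotLift]; ring
  rw [hshift]
  exact crNorm_add_const_le (hf.sub (contDiff_id.add contDiff_const))
    (periodic_sub_of_map_add_one hf1 (isCircleDiffeoLift_rotLift b).2.1) one_ne_zero _

theorem IsCircleDiffeoLift.liftDist_rotLift_le {f : ℝ → ℝ} (hf : IsCircleDiffeoLift f) (s : ℕ)
    (a b : ℝ) : liftDist s f (RotLift a) ≤ liftDist s f (RotLift b) + |a - b| := by
  simp only [liftDist, invFun_rotLift, ← max_add_add_right]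
  refine max_le_max ?_ ?_
  · simpa only [abs_sub_comm b a] using crNorm_sub_rotLift_le (contDiff_infty.mp hf.1 s) hf.2.1 a b
  · simpa only [neg_sub_neg, abs_sub_comm b a] using
      crNorm_sub_rotLift_le (contDiff_infty.mp hf.invFun.1 s) hf.invFun.2.1 (-a) (-b)

theorem tendsto_const_div_two_pow (C : ℝ) : Tendsto (fun n : ℕ => C / 2 ^ n) atTop (𝓝 0) :=
  tendsto_const_nhds.div_atTop (tendsto_pow_atTop_atTop_of_one_lt one_lt_two)

theorem exists_dist_le_of_le_geometric_two {α : Type*} [PseudoMetricSpace α] [CompleteSpace α]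
    {u : ℕ → α} {C : ℝ} {j : ℕ} (hu : ∀ k, j ≤ k → dist (u k) (u (k + 1)) ≤ C / 2 / 2 ^ k) :
    ∃ a, ∀ m, j ≤ m → dist (u m) a ≤ C / 2 ^ m := by
  have hshift : ∀ m, j ≤ m → ∀ n, dist (u (n + m)) (u (n + 1 + m)) ≤ C / 2 ^ m / 2 / 2 ^ n :=
    fun m hm n => by
      rw [add_right_comm]
      calc _ ≤ C / 2 / 2 ^ (n + m) := hu _ (by omega)
        _ = _ := by rw [pow_add]; ring
  obtain ⟨a, ha⟩ := cauchySeq_tendsto_of_complete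
    ((cauchySeq_shift j).mp (cauchySeq_of_le_geometric_two (hshift j le_rfl)))
  refine ⟨a, fun m hm => ?_⟩
  simpa using dist_le_of_le_geometric_two_of_tendsto₀ (hshift m hm)
    ((tendsto_add_atTop_iff_nat m).mpr ha)

theorem tendstoUniformly_of_dist_le_geometric_two {α β : Type*} [PseudoMetricSpace β]
    {F : ℕ → α → β} {f : α → β} {C : ℝ}
    (h : ∀ᶠ n in atTop, ∀ x, dist (F n x) (f x) ≤ C / 2 ^ n) : TendstoUniformly F f atTop := by
  refine Metric.tendstoUniformly_iff.mpr fun ε hε => ?_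
  filter_upwards [h, (tendsto_const_div_two_pow C).eventually (gt_mem_nhds hε)] with n hn hnε x
  exact (dist_comm (f x) (F n x) ▸ hn x).trans_lt hnε

section SmoothLimit

variable {𝕜 G : Type*} [NontriviallyNormedField 𝕜] [IsRCLikeNormedField 𝕜]
  [NormedAddCommGroup G] [NormedSpace 𝕜 G]

theorem contDiff_of_tendstoUniformly_iteratedDeriv {h : ℕ → 𝕜 → G} {L : ℕ → 𝕜 → G}
    (hh : ∀ n, ContDiff 𝕜 ∞ (h n))
    (hL : ∀ i, TendstoUniformly (fun n => iteratedDeriv i (h n)) (L i) atTop) :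
    ContDiff 𝕜 ∞ (L 0) ∧ ∀ i, iteratedDeriv i (L 0) = L i := by
  have hderiv : ∀ i x, HasDerivAt (L i) (L (i + 1) x) x := fun i =>
    hasDerivAt_of_tendstoUniformly (hL (i + 1))
      (Eventually.of_forall fun n y => by
        rw [iteratedDeriv_succ]
        exact ((hh n).differentiable_iteratedDeriv i
          (by exact_mod_cast ENat.natCast_lt_top i) y).hasDerivAt)
      fun y => (hL i).tendsto_at y
  have hiter : ∀ i, iteratedDeriv i (L 0) = L i := by
    intro i
    induction i with
    | zero => exact iteratedDeriv_zero
    | succ i ih => rw [iteratedDeriv_succ, ih]; exact funext fun x => (hderiv i x).deriv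
  refine ⟨contDiff_of_differentiable_iteratedDeriv fun m _ => ?_, hiter⟩
  rw [hiter]
  exact fun x => (hderiv m x).differentiableAt

variable [CompleteSpace G]

theorem exists_contDiff_limit_of_dist_iteratedDeriv_le {h : ℕ → 𝕜 → G}
    (hh : ∀ n, ContDiff 𝕜 ∞ (h n)) {C : ℝ} {c : ℕ}
    (hb : ∀ k i x, i ≤ k + c →
      dist (iteratedDeriv i (h k) x) (iteratedDeriv i (h (k + 1)) x) ≤ C / 2 / 2 ^ k) :
    ∃ H, ContDiff 𝕜 ∞ H ∧ ∀ n i x, i ≤ n + c →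
      dist (iteratedDeriv i (h n) x) (iteratedDeriv i H x) ≤ C / 2 ^ n := by
  choose L hL using fun i x =>
    exists_dist_le_of_le_geometric_two (j := i - c) fun k hk => hb k i x (by omega)
  obtain ⟨hH, hiter⟩ := contDiff_of_tendstoUniformly_iteratedDeriv hh fun i =>
    tendstoUniformly_of_dist_le_geometric_two
      ((eventually_ge_atTop (i - c)).mono fun n hn x => hL i x n hn)
  exact ⟨L 0, hH, fun n i x hi => hiter i ▸ hL i x n (by omega)⟩

end SmoothLimit

theorem tendsto_crNorm_sub_of_dist_le {h : ℕ → ℝ → ℝ} {H : ℝ → ℝ}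
    (hh : ∀ n, ContDiff ℝ ∞ (h n)) (hH : ContDiff ℝ ∞ H) {C : ℝ} {c : ℕ}
    (htail : ∀ n i x, i ≤ n + c →
      dist (iteratedDeriv i (h n) x) (iteratedDeriv i H x) ≤ C / 2 ^ n) (s : ℕ) :
    Tendsto (fun n => CrNorm s (fun x => h n x - H x)) atTop (𝓝 0) :=
  squeeze_zero' (Eventually.of_forall fun n => crNorm_nonneg _ _)
    ((eventually_ge_atTop s).mono fun n hn =>
      crNorm_sub_le (contDiff_infty.mp (hh n) _) (contDiff_infty.mp hH _)
        fun i hi x => htail n i x (by omega))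
    (tendsto_const_div_two_pow C)

theorem Function.LeftInverse.of_tendstoUniformly {ι α β : Type*} [UniformSpace α] [T2Space α]
    [TopologicalSpace β] {l : Filter ι} [l.NeBot] {f : ι → α → β} {g : ι → β → α}
    {F : α → β} {G : β → α} (hgf : ∀ n, LeftInverse (g n) (f n)) (hg : TendstoUniformly g G l)
    (hG : Continuous G) (hf : ∀ x, Tendsto (fun n => f n x) l (𝓝 (F x))) :
    LeftInverse G F := fun x =>
  tendsto_nhds_unique ((hg.tendsto_comp hG.continuousAt (hf x)).congr fun n => hgf n x)
    tendsto_const_nhds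

theorem isCircleDiffeoLift_of_tendstoUniformly {f : ℕ → ℝ → ℝ} {F G : ℝ → ℝ}
    (hf : ∀ n, IsCircleDiffeoLift (f n)) (hF : ContDiff ℝ ∞ F) (hG : ContDiff ℝ ∞ G)
    (hfF : ∀ i, TendstoUniformly (fun n => iteratedDeriv i (f n)) (iteratedDeriv i F) atTop)
    (hgG : TendstoUniformly (fun n => invFun (f n)) G atTop) :
    IsCircleDiffeoLift F ∧ invFun F = G := by
  have hfF0 : TendstoUniformly f F atTop := by simpa only [iteratedDeriv_zero] using hfF 0
  have hGF : LeftInverse G F := .of_tendstoUniformly (fun n => (hf n).leftInverse_invFun)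
    hgG hG.continuous hfF0.tendsto_at
  have hFG : RightInverse G F := .of_tendstoUniformly (fun n => (hf n).rightInverse_invFun)
    hfF0 hF.continuous hgG.tendsto_at
  have hF1 : ∀ x, F (x + 1) = F x + 1 := fun x =>
    tendsto_nhds_unique (hfF0.tendsto_at (x + 1))
      (by simpa only [(hf _).2.1] using (hfF0.tendsto_at x).add_const 1)
  have hderiv_nonneg : ∀ x, 0 ≤ deriv F x := fun x =>
    ge_of_tendsto (by simpa only [iteratedDeriv_one] using (hfF 1).tendsto_at x)
      (Eventually.of_forall fun n => ((hf n).2.2 x).le)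
  have hderiv_ne : ∀ x, deriv F x ≠ 0 := fun x hx => by
    have hchain : HasDerivAt (G ∘ F) (deriv G (F x) * deriv F x) x :=
      (hG.differentiable (by simp) _).hasDerivAt.comp x (hF.differentiable (by simp) x).hasDerivAt
    rw [hGF.comp_eq_id, hx, mul_zero] at hchain
    exact one_ne_zero ((hasDerivAt_id x).unique hchain)
  refine ⟨⟨hF, hF1, fun x => (hderiv_nonneg x).lt_of_ne' (hderiv_ne x)⟩, funext fun y => ?_⟩
  exact hGF.injective ((invFun_eq ⟨G y, hFG y⟩).trans (hFG y).symm)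

theorem exists_contDiff_limit_of_liftDist_le (r : ℕ) {f : ℕ → ℝ → ℝ}
    (hf : ∀ n, IsCircleDiffeoLift (f n))
    (hd : ∀ n, 1 ≤ n → liftDist (n + r) (f (n - 1)) (f n) ≤ ((2 : ℝ) ^ (n + r + 1))⁻¹) :
    ∃ F, ContDiff ℝ ∞ F ∧ ∀ n i x, i ≤ n + (r + 1) →
      dist (iteratedDeriv i (f n) x) (iteratedDeriv i F x) ≤ ((2 : ℝ) ^ (r + 1))⁻¹ / 2 ^ n :=
  exists_contDiff_limit_of_dist_iteratedDeriv_le (fun n => (hf n).1) fun k i x hi => by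
    have hk := hd (k + 1) (by omega)
    rw [Nat.add_sub_cancel] at hk
    calc _ ≤ liftDist (k + 1 + r) (f k) (f (k + 1)) :=
          (hf k).dist_iteratedDeriv_le_liftDist (hf (k + 1)) (by omega) x
      _ ≤ _ := hk
      _ = _ := by ring

/-- If `f₀ = R_{α₁}` with `|α - α₁| < 2^{-r-1}`, and `(f_n)` is a sequence of lifts of smooth
circle diffeomorphisms with `d_{n+r}(f_{n-1}, f_n) < 2^{-n-r-1}`, then `f_n` converges in
every `C^s` norm (together with the inverses) to a lift `f` of a smooth circle diffeomorphism
with `d_r(f, R_α) < 2^{-r}`. -/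
theorem stmt_15 (r : ℕ) (α α₁ : ℝ) (hclose : |α - α₁| < ((2 : ℝ) ^ (r + 1))⁻¹)
    (fseq : ℕ → ℝ → ℝ) (hlift : ∀ n, IsCircleDiffeoLift (fseq n))
    (h0 : fseq 0 = RotLift α₁)
    (hd : ∀ n, 1 ≤ n →
      liftDist (n + r) (fseq (n - 1)) (fseq n) < ((2 : ℝ) ^ (n + r + 1))⁻¹) :
    ∃ f : ℝ → ℝ, IsCircleDiffeoLift f ∧
      (∀ s : ℕ,
        Tendsto (fun n => CrNorm s (fun x => fseq n x - f x)) atTop (nhds 0) ∧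
        Tendsto (fun n => CrNorm s
          (fun x => Function.invFun (fseq n) x - Function.invFun f x)) atTop (nhds 0)) ∧
      liftDist r f (RotLift α) < ((2 : ℝ) ^ r)⁻¹ := by
  have hinv : ∀ n, IsCircleDiffeoLift (invFun (fseq n)) := fun n => (hlift n).invFun
  obtain ⟨F, hF, hFtail⟩ := exists_contDiff_limit_of_liftDist_le r hlift fun n hn => (hd n hn).le
  obtain ⟨G, hG, hGtail⟩ := exists_contDiff_limit_of_liftDist_le r hinv fun n hn => by
    rw [(hlift _).liftDist_invFun (hlift _)]
    exact (hd n hn).le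
  obtain ⟨hFlift, rfl⟩ := isCircleDiffeoLift_of_tendstoUniformly hlift hF hG
    (fun i => tendstoUniformly_of_dist_le_geometric_two
      ((eventually_ge_atTop i).mono fun n hn x => hFtail n i x (by omega)))
    (tendstoUniformly_of_dist_le_geometric_two (Eventually.of_forall fun n x => by
      simpa only [iteratedDeriv_zero] using hGtail n 0 x (by omega)))
  have hstart : liftDist (r + 1) (RotLift α₁) F ≤ ((2 : ℝ) ^ (r + 1))⁻¹ := by
    rw [← h0]
    refine (hlift 0).liftDist_le hFlift (fun i hi x => ?_) fun i hi x => ?_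
    · simpa using hFtail 0 i x (by omega)
    · simpa using hGtail 0 i x (by omega)
  refine ⟨F, hFlift, fun s => ⟨tendsto_crNorm_sub_of_dist_le (fun n => (hlift n).1) hF hFtail s,
    tendsto_crNorm_sub_of_dist_le (fun n => (hinv n).1) hG hGtail s⟩, ?_⟩
  calc liftDist r F (RotLift α) ≤ liftDist r F (RotLift α₁) + |α - α₁| :=
        hFlift.liftDist_rotLift_le r α α₁
    _ ≤ ((2 : ℝ) ^ (r + 1))⁻¹ + |α - α₁| := by
        grw [liftDist_comm, liftDist_mono r.le_succ, hstart]
    _ < ((2 : ℝ) ^ (r + 1))⁻¹ + ((2 : ℝ) ^ (r + 1))⁻¹ := by gcongr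
    _ = ((2 : ℝ) ^ r)⁻¹ := by ring
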